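/- arXiv:1509.06459 — 5 statements merged into one kernel-verified Lean document; each statement's English description precedes it below -/
import Mathlib

section
/- Let g: ℝ → ℝ be differentiable with g' continuous and nonincreasing (as holds when g is concave). Fix θ ∈ ℝ^p, x ∈ ℝ^p, γ > 0, and a positive semidefinite matrix C. Set κ = g'(x^T θ) and a = x^T C x ≥ 0. Then the one-dimensional fixed point equation ξ = γ g'(x^T θ + ξ a) has a solution ξ* lying between 0 and γκ (i.e., ξ* ∈ [0, γκ] if κ ≥ 0 and ξ* ∈ [γκ, 0] if κ ≤ 0). -/
open Matrix Set Function
open scoped Interval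

/- The step `ξ ↦ γ g'(xᵀθ + ξ xᵀCx)` is continuous and, because `g'` is nonincreasing, `γ ≥ 0`
and `xᵀCx ≥ 0`, antitone. A continuous antitone self-map of `ℝ` moves `0` towards its image
`γ g'(xᵀθ)` and moves that image back towards `0`, so by the intermediate value theorem it has a
fixed point between the two. -/

theorem Antitone.exists_mem_uIcc_isFixedPt {α : Type*} [ConditionallyCompleteLinearOrder α]
    [TopologicalSpace α] [OrderTopology α] [DenselyOrdered α] {f : α → α} (hf : Antitone f)
    (a : α) (hcont : ContinuousOn f [[a, f a]]) : ∃ c ∈ [[a, f a]], IsFixedPt f c := by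
  rcases le_total a (f a) with h | h
  · exact _root_.exists_mem_uIcc_isFixedPt hcont h (hf h)
  · rw [uIcc_comm] at hcont ⊢
    exact _root_.exists_mem_uIcc_isFixedPt hcont (hf h) h

theorem antitone_const_mul_comp_add_mul {h : ℝ → ℝ} (hh : Antitone h) {γ a : ℝ} (hγ : 0 ≤ γ)
    (ha : 0 ≤ a) (t : ℝ) : Antitone fun ξ => γ * h (t + ξ * a) := fun _ _ hξ =>
  mul_le_mul_of_nonneg_left (hh (by gcongr)) hγ

theorem stmt_1_general {p : ℕ} (g : ℝ → ℝ)
    (hcont : Continuous (deriv g)) (hanti : Antitone (deriv g))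
    (θ x : Fin p → ℝ) (γ : ℝ) (hγ : 0 < γ)
    (C : Matrix (Fin p) (Fin p) ℝ) (hC : C.PosSemidef) :
    ∃ ξ : ℝ, ξ = γ * deriv g (x ⬝ᵥ θ + ξ * (x ⬝ᵥ C.mulVec x)) ∧
      ξ ∈ Set.uIcc 0 (γ * deriv g (x ⬝ᵥ θ)) := by
  have ha : 0 ≤ x ⬝ᵥ C *ᵥ x := by simpa using hC.dotProduct_mulVec_nonneg x
  have hstep := antitone_const_mul_comp_add_mul hanti hγ.le ha (x ⬝ᵥ θ)
  obtain ⟨ξ, hξ, hfix⟩ := hstep.exists_mem_uIcc_isFixedPt 0 (by fun_prop)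
  exact ⟨ξ, hfix.symm, by simpa using hξ⟩

/-- Existence of a solution to the one-dimensional implicit-SGD fixed point
equation, lying between 0 and γ·g'(xᵀθ). -/
theorem stmt_1 {p : ℕ} (g : ℝ → ℝ) (hg : Differentiable ℝ g)
    (hcont : Continuous (deriv g)) (hanti : Antitone (deriv g))
    (θ x : Fin p → ℝ) (γ : ℝ) (hγ : 0 < γ)
    (C : Matrix (Fin p) (Fin p) ℝ) (hC : C.PosSemidef) :
    ∃ ξ : ℝ, ξ = γ * deriv g (x ⬝ᵥ θ + ξ * (x ⬝ᵥ C.mulVec x)) ∧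
      ξ ∈ Set.uIcc 0 (γ * deriv g (x ⬝ᵥ θ)) :=
  stmt_1_general g hcont hanti θ x γ hγ C hC
end

section
/- Let h: ℝ → ℝ be differentiable with h' ≥ 0 (a GLM transfer function). For fixed x ∈ ℝ^p, y ∈ ℝ, γ > 0 and positive semidefinite C, the function F(ξ) = γ(y − h(x^T θ + ξ x^T C x)) is nonincreasing in ξ, and hence the map ξ ↦ F(ξ) has at most one fixed point whenever h' > 0 and x^T C x > 0; at least one fixed point exists between 0 and γ(y − h(x^T θ)) if h is continuous. -/
open Matrix Set Function

/-
A monotone transfer function h composed with the nondecreasing affine map ξ ↦ xᵀθ + ξ·xᵀCx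
(xᵀCx ≥ 0 since C is positive semidefinite) is monotone, so F = γ(y − h(⋯)) is antitone.
An antitone map has at most one fixed point, and by the intermediate value theorem a continuous
antitone map has one between any point c and its image F c; take c = 0.
-/

theorem Antitone.eq_of_isFixedPt {α : Type*} [LinearOrder α] {f : α → α} (hf : Antitone f)
    {a b : α} (ha : IsFixedPt f a) (hb : IsFixedPt f b) : a = b := by
  rcases le_total a b with hab | hba
  · exact le_antisymm hab (ha ▸ hb ▸ hf hab)
  · exact le_antisymm (hb ▸ ha ▸ hf hba) hba

theorem Antitone.exists_isFixedPt_mem_uIcc {α : Type*} [ConditionallyCompleteLinearOrder α]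
    [TopologicalSpace α] [OrderTopology α] [DenselyOrdered α] {f : α → α} (hf : Antitone f)
    (c : α) (hcont : ContinuousOn f (uIcc c (f c))) : ∃ ξ ∈ uIcc c (f c), IsFixedPt f ξ := by
  rcases le_total c (f c) with hc | hc
  · obtain ⟨ξ, hξ, hfix⟩ := isPreconnected_uIcc.intermediate_value₂ left_mem_uIcc right_mem_uIcc
      continuousOn_id hcont hc (hf hc)
    exact ⟨ξ, hξ, hfix.symm⟩
  · exact isPreconnected_uIcc.intermediate_value₂ left_mem_uIcc right_mem_uIcc
      hcont continuousOn_id hc (hf hc)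

theorem Monotone.antitone_const_mul_const_sub_comp_affine {h : ℝ → ℝ} (hh : Monotone h)
    {γ a : ℝ} (hγ : 0 ≤ γ) (ha : 0 ≤ a) (y b : ℝ) :
    Antitone fun ξ : ℝ => γ * (y - h (b + ξ * a)) := by
  intro ξ₁ ξ₂ hξ
  dsimp only
  gcongr
  exact hh (by gcongr)

/-- For a GLM transfer function h with h' ≥ 0, the map
F(ξ) = γ(y − h(xᵀθ + ξ xᵀCx)) is nonincreasing; it has at most one fixed
point when h' > 0 and xᵀCx > 0, and at least one fixed point between 0 and
γ(y − h(xᵀθ)) when h is continuous. -/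
theorem stmt_6 {p : ℕ} (h : ℝ → ℝ) (hdiff : Differentiable ℝ h)
    (hpos : ∀ u, 0 ≤ deriv h u)
    (x : Fin p → ℝ) (y : ℝ) (θ : Fin p → ℝ) (γ : ℝ) (hγ : 0 < γ)
    (C : Matrix (Fin p) (Fin p) ℝ) (hC : C.PosSemidef) :
    Antitone (fun ξ : ℝ => γ * (y - h (x ⬝ᵥ θ + ξ * (x ⬝ᵥ C.mulVec x)))) ∧
    ((∀ u, 0 < deriv h u) → 0 < x ⬝ᵥ C.mulVec x →
      ∀ ξ₁ ξ₂ : ℝ,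
        γ * (y - h (x ⬝ᵥ θ + ξ₁ * (x ⬝ᵥ C.mulVec x))) = ξ₁ →
        γ * (y - h (x ⬝ᵥ θ + ξ₂ * (x ⬝ᵥ C.mulVec x))) = ξ₂ → ξ₁ = ξ₂) ∧
    (Continuous h → ∃ ξ : ℝ,
      γ * (y - h (x ⬝ᵥ θ + ξ * (x ⬝ᵥ C.mulVec x))) = ξ ∧
      ξ ∈ Set.uIcc 0 (γ * (y - h (x ⬝ᵥ θ)))) := by
  have hxCx : 0 ≤ x ⬝ᵥ C.mulVec x := by simpa using hC.dotProduct_mulVec_nonneg x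
  have hF := (monotone_of_deriv_nonneg hdiff hpos).antitone_const_mul_const_sub_comp_affine
    hγ.le hxCx y (x ⬝ᵥ θ)
  refine ⟨hF, fun _ _ _ _ h₁ h₂ => hF.eq_of_isFixedPt h₁ h₂, fun hcont => ?_⟩
  obtain ⟨ξ, hmem, hfix⟩ := hF.exists_isFixedPt_mem_uIcc 0 (by fun_prop)
  exact ⟨ξ, hfix, by simpa using hmem⟩
end

section
/- For logistic regression (h(u) = 1/(1+e^{-u})) with binary outcome y ∈ {0,1}, the implicit update fixed-point equation ξ = γ(y − h(x^T θ + ξ‖x‖²)) has a unique solution ξ* for any γ > 0, θ ∈ ℝ^p, and x ≠ 0, and ξ* lies strictly between 0 and γ(y − h(x^T θ)) when y − h(x^T θ) ≠ 0. -/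
/-!
Write the fixed-point equation as `g ξ = 0` with `g ξ = ξ - γ (y - h (a + ξ b))`. Since `h` is
nondecreasing and `γ, b ≥ 0`, `g` is strictly increasing, so it has at most one zero; since
`0 ≤ h ≤ 1`, `g` changes sign on `[γ (y - 1), γ y]`, so it has one. If `h` is strictly
increasing and `b > 0`, then `ξ ≤ 0` would force `h (a + ξ b) ≤ h a` and hence
`ξ ≥ γ (y - h a)`, so for a positive residual `y - h a` the solution is positive, and then
`h (a + ξ b) > h a` places it below `γ (y - h a)`; a negative residual is symmetric.
-/

open scoped RealInnerProductSpace

section FixedPoint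

variable {h : ℝ → ℝ} {a b y γ ξ : ℝ}

theorem existsUnique_eq_mul_sub_comp (hc : Continuous h) (hm : Monotone h)
    (h0 : ∀ u, 0 ≤ h u) (h1 : ∀ u, h u ≤ 1) (hγ : 0 ≤ γ) (hb : 0 ≤ b) :
    ∃! ξ : ℝ, ξ = γ * (y - h (a + ξ * b)) := by
  set g : ℝ → ℝ := fun ξ => ξ - γ * (y - h (a + ξ * b))
  have hg_mono : StrictMono g := by
    intro u v huv
    have : h (a + u * b) ≤ h (a + v * b) := hm (by gcongr)
    have : γ * h (a + u * b) ≤ γ * h (a + v * b) := by gcongr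
    simp only [g]
    linarith
  have hg_cont : Continuous g := by fun_prop
  have hg_left : g (γ * (y - 1)) ≤ 0 := by
    have : γ * h (a + γ * (y - 1) * b) ≤ γ * 1 := by gcongr; exact h1 _
    simp only [g]
    linarith
  have hg_right : 0 ≤ g (γ * y) := by
    have : 0 ≤ γ * h (a + γ * y * b) := mul_nonneg hγ (h0 _)
    simp only [g]
    linarith
  have hg_zero_iff : ∀ ξ, g ξ = 0 ↔ ξ = γ * (y - h (a + ξ * b)) := fun ξ => sub_eq_zero
  obtain ⟨ξ₀, -, hξ₀⟩ := intermediate_value_Icc (by nlinarith) hg_cont.continuousOn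
    ⟨hg_left, hg_right⟩
  refine ⟨ξ₀, (hg_zero_iff ξ₀).1 hξ₀, fun ξ hξ => hg_mono.injective ?_⟩
  rw [(hg_zero_iff ξ).2 hξ, hξ₀]

theorem pos_lt_of_eq_mul_sub_comp (hm : StrictMono h) (hγ : 0 < γ) (hb : 0 < b)
    (hξ : ξ = γ * (y - h (a + ξ * b))) (hr : 0 < y - h a) :
    0 < ξ ∧ ξ < γ * (y - h a) := by
  have hξ_pos : 0 < ξ := by
    by_contra! hξ_nonpos
    have : h (a + ξ * b) ≤ h a := hm.monotone (by nlinarith)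
    nlinarith
  have : h a < h (a + ξ * b) := hm (by nlinarith)
  exact ⟨hξ_pos, by nlinarith⟩

theorem lt_neg_of_eq_mul_sub_comp (hm : StrictMono h) (hγ : 0 < γ) (hb : 0 < b)
    (hξ : ξ = γ * (y - h (a + ξ * b))) (hr : y - h a < 0) :
    γ * (y - h a) < ξ ∧ ξ < 0 := by
  have hξ_neg : ξ < 0 := by
    by_contra! hξ_nonneg
    have : h a ≤ h (a + ξ * b) := hm.monotone (by nlinarith)
    nlinarith
  have : h (a + ξ * b) < h a := hm (by nlinarith)
  exact ⟨by nlinarith, hξ_neg⟩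

end FixedPoint

theorem stmt_7_general {p : ℕ} (θ x : EuclideanSpace ℝ (Fin p)) (hx : x ≠ 0)
    (y : ℝ) (γ : ℝ) (hγ : 0 < γ) :
    (∃! ξ : ℝ, ξ = γ * (y - (1 + Real.exp (-(⟪x, θ⟫ + ξ * ‖x‖ ^ 2)))⁻¹)) ∧
    (∀ ξ : ℝ, ξ = γ * (y - (1 + Real.exp (-(⟪x, θ⟫ + ξ * ‖x‖ ^ 2)))⁻¹) →
      y - (1 + Real.exp (-⟪x, θ⟫))⁻¹ ≠ 0 →
      ((0 < ξ ∧ ξ < γ * (y - (1 + Real.exp (-⟪x, θ⟫))⁻¹)) ∨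
       (γ * (y - (1 + Real.exp (-⟪x, θ⟫))⁻¹) < ξ ∧ ξ < 0))) := by
  have hb : 0 < ‖x‖ ^ 2 := by positivity
  refine ⟨existsUnique_eq_mul_sub_comp (h := Real.sigmoid) continuous_sigmoid
    Real.sigmoid_monotone Real.sigmoid_nonneg Real.sigmoid_le_one hγ.le hb.le,
    fun ξ hξ hr => ?_⟩
  rcases hr.lt_or_gt with hr | hr
  · exact .inr <| lt_neg_of_eq_mul_sub_comp (h := Real.sigmoid)
      Real.sigmoid_strictMono hγ hb hξ hr
  · exact .inl <| pos_lt_of_eq_mul_sub_comp (h := Real.sigmoid)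
      Real.sigmoid_strictMono hγ hb hξ hr

/-- For logistic regression the implicit-update fixed point equation has a
unique solution, which lies strictly between 0 and γ(y − h(xᵀθ)) when the
residual is nonzero. -/
theorem stmt_7 {p : ℕ} (θ x : EuclideanSpace ℝ (Fin p)) (hx : x ≠ 0)
    (y : ℝ) (hy : y = 0 ∨ y = 1) (γ : ℝ) (hγ : 0 < γ) :
    (∃! ξ : ℝ, ξ = γ * (y - (1 + Real.exp (-(⟪x, θ⟫ + ξ * ‖x‖ ^ 2)))⁻¹)) ∧
    (∀ ξ : ℝ, ξ = γ * (y - (1 + Real.exp (-(⟪x, θ⟫ + ξ * ‖x‖ ^ 2)))⁻¹) →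
      y - (1 + Real.exp (-⟪x, θ⟫))⁻¹ ≠ 0 →
      ((0 < ξ ∧ ξ < γ * (y - (1 + Real.exp (-⟪x, θ⟫))⁻¹)) ∨
       (γ * (y - (1 + Real.exp (-⟪x, θ⟫))⁻¹) < ξ ∧ ξ < 0))) :=
  stmt_7_general θ x hx y γ hγ
end

section
/- Stability of the implicit update for concave log-likelihood under linear dependence: with ℓ(θ) = g(x^T θ), g differentiable and g' nonincreasing, and implicit update θ_n = θ_{n-1} + γ g'(x^T θ_n) x (γ > 0), the natural parameter moves toward any zero of g': if g'(η⋆) = 0 and η_{n-1} = x^T θ_{n-1}, then |x^T θ_n − η⋆| ≤ |η_{n-1} − η⋆|. -/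
open scoped RealInnerProductSpace

/-! For antitone `g'` vanishing at `η⋆`, the point `η` of the implicit step satisfies
`(η - η⋆) g'(η) ≤ 0`, and `η - η⋆ = (η₀ - η⋆) + γ ‖x‖² g'(η)`. Adding to `a = η - η⋆`
a term of the opposite sign can only increase its absolute value, so `|η - η⋆| ≤ |η₀ - η⋆|`. -/

theorem abs_le_abs_sub_of_mul_nonpos {a b : ℝ} (h : a * b ≤ 0) : |a| ≤ |a - b| :=
  sq_le_sq.mp (by nlinarith [sq_nonneg b])

theorem Antitone.sub_mul_apply_nonpos {f : ℝ → ℝ} (hf : Antitone f) {z : ℝ} (hz : f z = 0)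
    (y : ℝ) : (y - z) * f y ≤ 0 := by
  rcases le_total z y with h | h
  · exact mul_nonpos_of_nonneg_of_nonpos (sub_nonneg.mpr h) (hz ▸ hf h)
  · exact mul_nonpos_of_nonpos_of_nonneg (sub_nonpos.mpr h) (hz ▸ hf h)

theorem abs_sub_le_of_eq_add_mul_of_antitone {f : ℝ → ℝ} (hf : Antitone f) {z : ℝ}
    (hz : f z = 0) {c y y₀ : ℝ} (hc : 0 ≤ c) (hy : y = y₀ + c * f y) :
    |y - z| ≤ |y₀ - z| := by
  have hsign : (y - z) * (c * f y) ≤ 0 := by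
    rw [mul_left_comm]
    exact mul_nonpos_of_nonneg_of_nonpos hc (hf.sub_mul_apply_nonpos hz y)
  calc |y - z| ≤ |y - z - c * f y| := abs_le_abs_sub_of_mul_nonpos hsign
    _ = |y₀ - z| := by congr 1; linarith

theorem inner_add_smul_self_right {E : Type*} [NormedAddCommGroup E] [InnerProductSpace ℝ E]
    (x θ : E) (c : ℝ) : ⟪x, θ + c • x⟫ = ⟪x, θ⟫ + c * ‖x‖ ^ 2 := by
  rw [inner_add_right, real_inner_smul_right, real_inner_self_eq_norm_sq]

theorem stmt_16_general {p : ℕ} (g : ℝ → ℝ)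
    (hanti : Antitone (deriv g)) (γ : ℝ) (hγ : 0 < γ)
    (x θold θnew : EuclideanSpace ℝ (Fin p))
    (him : θnew = θold + (γ * deriv g ⟪x, θnew⟫) • x)
    (ηstar : ℝ) (hstar : deriv g ηstar = 0) :
    |⟪x, θnew⟫ - ηstar| ≤ |⟪x, θold⟫ - ηstar| := by
  have hstep : ⟪x, θnew⟫ = ⟪x, θold⟫ + γ * ‖x‖ ^ 2 * deriv g ⟪x, θnew⟫ := by
    conv_lhs => rw [him]
    rw [inner_add_smul_self_right]
    ring
  exact abs_sub_le_of_eq_add_mul_of_antitone hanti hstar (by positivity) hstep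

/-- Stability of the implicit update: with g concave (deriv g nonincreasing),
the implicit update moves the natural parameter toward any zero of g'. -/
theorem stmt_16 {p : ℕ} (g : ℝ → ℝ) (hg : Differentiable ℝ g)
    (hanti : Antitone (deriv g)) (γ : ℝ) (hγ : 0 < γ)
    (x θold θnew : EuclideanSpace ℝ (Fin p))
    (him : θnew = θold + (γ * deriv g ⟪x, θnew⟫) • x)
    (ηstar : ℝ) (hstar : deriv g ηstar = 0) :
    |⟪x, θnew⟫ - ηstar| ≤ |⟪x, θold⟫ - ηstar| :=
  stmt_16_general g hanti γ hγ x θold θnew him ηstar hstar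
end

section
/- For the Poisson GLM (h(u) = e^u) with outcome y ≥ 0, the implicit update fixed-point equation ξ = γ(y − exp(x^T θ + ξ‖x‖²)) has a unique solution for any γ > 0 and x ≠ 0, whereas the explicit update θ^sgd = θ + γ(y − e^{x^T θ})x can produce iterates with exponentially growing gradient magnitude: for any γ > 0 there exist θ, x, y such that |y − h(x^T θ^sgd)| > |y − h(x^T θ)|. -/
open scoped RealInnerProductSpace

/-!
The implicit update is well posed because its scalar map is continuous and antitone, and such a
map has exactly one fixed point: `ξ - f ξ` changes sign between `0` and `f 0` and is strictly
increasing. The explicit update can overshoot: with `θ = 0`, `y = 2` and `‖x‖² = 2 / γ` it moves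
`⟪x, θ⟫` from `0` to `2`, and the residual grows from `1` to `exp 2 - 2 > 1`.
-/

open Real Set

theorem existsUnique_eq_of_antitone {f : ℝ → ℝ} (hf : Antitone f) (hc : Continuous f) :
    ∃! ξ : ℝ, ξ = f ξ := by
  have hsign : (0 : ℝ) ∈ uIcc (0 - f 0) (f 0 - f (f 0)) := by
    rcases le_total 0 (f 0) with h | h
    · exact mem_uIcc.2 (Or.inl ⟨by linarith, by linarith [hf h]⟩)
    · exact mem_uIcc.2 (Or.inr ⟨by linarith [hf h], by linarith⟩)
  obtain ⟨ξ, -, hξ⟩ :=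
    intermediate_value_uIcc (f := fun ξ => ξ - f ξ) (by fun_prop) hsign
  have hfix : ξ = f ξ := by linarith [show ξ - f ξ = 0 from hξ]
  refine ⟨ξ, hfix, fun η hη => ?_⟩
  rcases lt_trichotomy η ξ with h | h | h
  · linarith [hf h.le]
  · exact h
  · linarith [hf h.le]

theorem antitone_implicitPoissonMap {γ a : ℝ} (hγ : 0 ≤ γ) (ha : 0 ≤ a) (c y : ℝ) :
    Antitone fun ξ : ℝ => γ * (y - exp (c + ξ * a)) :=
  fun u v huv => by dsimp only; gcongr

theorem exists_explicitPoissonStep_residual_increase {E : Type*} [NormedAddCommGroup E]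
    [InnerProductSpace ℝ E] [Nontrivial E] {γ : ℝ} (hγ : 0 < γ) :
    ∃ (θ x : E) (y : ℝ), 0 ≤ y ∧
      |y - exp ⟪x, θ + (γ * (y - exp ⟪x, θ⟫)) • x⟫| > |y - exp ⟪x, θ⟫| := by
  obtain ⟨x, hx⟩ := exists_norm_eq E (sqrt_nonneg (2 / γ))
  have hstep : ⟪x, (0 : E) + (γ * (2 - exp ⟪x, (0 : E)⟫)) • x⟫ = 2 := by
    rw [zero_add, inner_zero_right, exp_zero, inner_smul_right, real_inner_self_eq_norm_sq, hx,
      sq_sqrt (by positivity)]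
    field_simp
    norm_num
  have hexp : 3 < exp 2 := by linarith [add_one_lt_exp (two_ne_zero (α := ℝ))]
  refine ⟨0, x, 2, zero_le_two, ?_⟩
  rw [hstep, inner_zero_right, exp_zero, abs_of_neg (by linarith), abs_of_pos (by norm_num)]
  linarith

/-- For the Poisson GLM the implicit fixed-point equation has a unique
solution for any γ > 0 and x ≠ 0, whereas the explicit update can strictly
increase the gradient magnitude. -/
theorem stmt_19 {p : ℕ} (hp : 0 < p) (γ : ℝ) (hγ : 0 < γ) :
    (∀ (θ x : EuclideanSpace ℝ (Fin p)) (y : ℝ), x ≠ 0 → 0 ≤ y →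
      ∃! ξ : ℝ, ξ = γ * (y - Real.exp (⟪x, θ⟫ + ξ * ‖x‖ ^ 2))) ∧
    (∃ (θ x : EuclideanSpace ℝ (Fin p)) (y : ℝ), 0 ≤ y ∧
      |y - Real.exp ⟪x, θ + (γ * (y - Real.exp ⟪x, θ⟫)) • x⟫| >
        |y - Real.exp ⟪x, θ⟫|) := by
  have : Nonempty (Fin p) := ⟨⟨0, hp⟩⟩
  refine ⟨fun θ x y _ _ => ?_, exists_explicitPoissonStep_residual_increase hγ⟩
  exact existsUnique_eq_of_antitone
    (antitone_implicitPoissonMap hγ.le (sq_nonneg ‖x‖) ⟪x, θ⟫ y) (by fun_prop)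
end
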